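/- Fix integers k ≥ 1, m ≥ 3, and n ≥ 3 with 2cos((m−2)π/(m−1)) ≤ 4cos²(π/n) − 2. Let x_n = 2cos(π/n), λ(x,y) = x² − y − (y−2)(y+2−x²)S_k(y)S_{k−1}(y), α(x,y) = 1 + (y+2−x²)S_{k−1}(y)(S_k(y)−S_{k−1}(y)), and φ(x,y) = S_{m−1}(λ(x,y))·α(x,y) − S_{m−2}(λ(x,y)). Then φ(x_n, ·) has a real root y_n > 2. -/

import Mathlib

noncomputable def S : ℕ → ℝ → ℝ
  | 0, _ => 1
  | 1, z => z
  | n + 2, z => z * S (n + 1) z - S n z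

noncomputable def lam (k : ℕ) (x y : ℝ) : ℝ :=
  x ^ 2 - y - (y - 2) * (y + 2 - x ^ 2) * S k y * S (k - 1) y

noncomputable def alpha (k : ℕ) (x y : ℝ) : ℝ :=
  1 + (y + 2 - x ^ 2) * S (k - 1) y * (S k y - S (k - 1) y)

/-!
For `y ≥ 2` and `x² ≤ 4` one has `α(x, y) ≥ 1` and `λ(x, y) ≤ x² - y`, with `λ(x, 2) = x² - 2`.
Write `m = n + 2` and `c = -2 cos (π / (n + 1))`, so that `S_n(c) = 0` and `S_{n+1}(c) = (-1)ⁿ`.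
The hypothesis `c ≤ x² - 2` gives `y_c ≥ 2` with `λ(x, y_c) = c`, where `(-1)ⁿ φ = α > 0`.
For large `y`, `λ ≤ -2`, where `(-1)ʲ S_j(λ) ≥ 1` for all `j`, which forces `(-1)ⁿ φ ≤ -α - 1 < 0`.
The intermediate value theorem gives a root of `φ` beyond `y_c`.
-/

open Real

theorem S_eq_eval_chebyshevS : ∀ (n : ℕ) (z : ℝ), S n z = (Polynomial.Chebyshev.S ℝ n).eval z
  | 0, z => by simp [S]
  | 1, z => by simp [S]
  | n + 2, z => by
    have h := Polynomial.Chebyshev.S_add_two ℝ n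
    push_cast at h ⊢
    simp only [S, h, Polynomial.eval_sub, Polynomial.eval_mul, Polynomial.eval_X,
      S_eq_eval_chebyshevS (n + 1), S_eq_eval_chebyshevS n, Nat.cast_add, Nat.cast_one]

@[fun_prop]
theorem continuous_S (n : ℕ) : Continuous (S n) := by
  simpa only [funext (S_eq_eval_chebyshevS n)] using Polynomial.continuous _

theorem S_two_mul_cos_mul_sin (n : ℕ) (θ : ℝ) :
    S n (2 * cos θ) * sin θ = sin ((n + 1) * θ) := by
  simp [S_eq_eval_chebyshevS]

theorem S_neg : ∀ (n : ℕ) (z : ℝ), S n (-z) = (-1) ^ n * S n z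
  | 0, z => by simp [S]
  | 1, z => by simp [S]
  | n + 2, z => by
    simp only [S, S_neg (n + 1), S_neg n]
    ring

theorem one_le_S_and_S_le_S_succ {y : ℝ} (hy : 2 ≤ y) : ∀ n : ℕ, 1 ≤ S n y ∧ S n y ≤ S (n + 1) y
  | 0 => ⟨le_rfl, by simp only [S]; linarith⟩
  | n + 1 => by
    obtain ⟨h1, h2⟩ := one_le_S_and_S_le_S_succ hy n
    have h3 : S (n + 2) y = y * S (n + 1) y - S n y := rfl
    exact ⟨by linarith, by rw [h3]; nlinarith⟩

theorem one_le_S {y : ℝ} (hy : 2 ≤ y) (n : ℕ) : 1 ≤ S n y :=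
  (one_le_S_and_S_le_S_succ hy n).1

theorem monotone_S {y : ℝ} (hy : 2 ≤ y) : Monotone fun n => S n y :=
  monotone_nat_of_le_succ fun n => (one_le_S_and_S_le_S_succ hy n).2

theorem one_le_neg_one_pow_mul_S {z : ℝ} (hz : z ≤ -2) (n : ℕ) : 1 ≤ (-1) ^ n * S n z := by
  simpa [S_neg] using one_le_S (y := -z) (by linarith) n

theorem sin_pi_div_succ_pos {n : ℕ} (hn : 1 ≤ n) : 0 < sin (π / (n + 1)) := by
  apply sin_pos_of_pos_of_lt_pi (by positivity)
  rw [div_lt_iff₀ (by positivity)]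
  have : (1 : ℝ) ≤ n := by exact_mod_cast hn
  nlinarith [pi_pos]

theorem S_two_mul_cos_pi_div_succ {n : ℕ} (hn : 1 ≤ n) : S n (2 * cos (π / (n + 1))) = 0 := by
  have h := S_two_mul_cos_mul_sin n (π / (n + 1))
  rw [mul_div_cancel₀ _ (by positivity), sin_pi] at h
  exact (mul_eq_zero.mp h).resolve_right (sin_pi_div_succ_pos hn).ne'

theorem S_succ_two_mul_cos_pi_div_succ {n : ℕ} (hn : 1 ≤ n) :
    S (n + 1) (2 * cos (π / (n + 1))) = -1 := by
  have h := S_two_mul_cos_mul_sin (n + 1) (π / (n + 1))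
  have e : ((n + 1 : ℕ) + 1 : ℝ) * (π / (n + 1)) = π / (n + 1) + π := by
    field_simp
    push_cast
    ring
  rw [e, sin_add_pi] at h
  exact mul_right_cancel₀ (sin_pi_div_succ_pos hn).ne' (by rw [h]; ring)

/-- The Riley polynomial `φ` of `J(2k+1, 2m)`. -/
noncomputable def riley (k m : ℕ) (x y : ℝ) : ℝ :=
  S (m - 1) (lam k x y) * alpha k x y - S (m - 2) (lam k x y)

theorem riley_add_two (k n : ℕ) (x y : ℝ) :
    riley k (n + 2) x y = S (n + 1) (lam k x y) * alpha k x y - S n (lam k x y) :=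
  rfl

section Riley

variable (k : ℕ) {x : ℝ}

theorem continuous_lam (x : ℝ) : Continuous (lam k x) := by
  unfold lam
  fun_prop

theorem continuous_riley (m : ℕ) (x : ℝ) : Continuous (riley k m x) := by
  unfold riley alpha lam
  fun_prop

theorem lam_two (x : ℝ) : lam k x 2 = x ^ 2 - 2 := by
  unfold lam
  ring

theorem lam_le_sub (hx : x ^ 2 ≤ 4) {y : ℝ} (hy : 2 ≤ y) : lam k x y ≤ x ^ 2 - y := by
  have := one_le_S hy k
  have := one_le_S hy (k - 1)
  have : 0 ≤ (y - 2) * (y + 2 - x ^ 2) * S k y * S (k - 1) y := by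
    apply mul_nonneg (mul_nonneg (mul_nonneg _ _) _) _ <;> linarith
  unfold lam
  linarith

theorem one_le_alpha (hx : x ^ 2 ≤ 4) {y : ℝ} (hy : 2 ≤ y) : 1 ≤ alpha k x y := by
  have := one_le_S hy (k - 1)
  have := monotone_S hy (Nat.sub_le k 1)
  have : 0 ≤ (y + 2 - x ^ 2) * S (k - 1) y * (S k y - S (k - 1) y) := by
    apply mul_nonneg (mul_nonneg _ _) _ <;> linarith
  unfold alpha
  linarith

theorem exists_lam_eq (hx : x ^ 2 ≤ 4) {c : ℝ} (hc : c ≤ x ^ 2 - 2) :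
    ∃ y, 2 ≤ y ∧ lam k x y = c := by
  set Y := max 2 (x ^ 2 - c)
  have hY : 2 ≤ Y := le_max_left _ _
  have hlamY : lam k x Y ≤ c := by
    have := lam_le_sub k hx hY
    have := le_max_right 2 (x ^ 2 - c)
    linarith
  obtain ⟨y, hy, hlam⟩ := intermediate_value_Icc' hY (continuous_lam k x).continuousOn
    ⟨hlamY, (lam_two k x).symm ▸ hc⟩
  exact ⟨y, hy.1, hlam⟩

theorem neg_one_pow_mul_riley_of_lam_eq {n : ℕ} (hn : 1 ≤ n) {y : ℝ}
    (hy : lam k x y = -(2 * cos (π / (n + 1)))) :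
    (-1) ^ n * riley k (n + 2) x y = alpha k x y := by
  have hpow : (-1 : ℝ) ^ n * (-1) ^ n = 1 := by rw [← mul_pow, neg_one_mul, neg_neg, one_pow]
  rw [riley_add_two, hy, S_neg, S_neg, S_two_mul_cos_pi_div_succ hn,
    S_succ_two_mul_cos_pi_div_succ hn]
  linear_combination (alpha k x y) * hpow

theorem neg_one_pow_mul_riley_neg (hx : x ^ 2 ≤ 4) (n : ℕ) {y : ℝ} (hy : x ^ 2 + 2 ≤ y) :
    (-1) ^ n * riley k (n + 2) x y < 0 := by
  have hy2 : 2 ≤ y := by nlinarith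
  have hlam : lam k x y ≤ -2 := by linarith [lam_le_sub k hx hy2]
  have h1 := one_le_neg_one_pow_mul_S hlam (n + 1)
  have h0 := one_le_neg_one_pow_mul_S hlam n
  have hα := one_le_alpha k hx hy2
  have e : (-1) ^ n * riley k (n + 2) x y =
      -(((-1) ^ (n + 1) * S (n + 1) (lam k x y)) * alpha k x y + (-1) ^ n * S n (lam k x y)) := by
    rw [riley_add_two]
    ring
  rw [e]
  nlinarith

theorem exists_riley_eq_zero {n : ℕ} (hn : 1 ≤ n) (hx : x ^ 2 ≤ 4)
    (hc : -(2 * cos (π / (n + 1))) ≤ x ^ 2 - 2) :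
    ∃ y, 2 < y ∧ riley k (n + 2) x y = 0 := by
  obtain ⟨yc, hyc2, hyc⟩ := exists_lam_eq k hx hc
  set g := fun y => (-1) ^ n * riley k (n + 2) x y
  set Y := max yc (x ^ 2 + 2) + 1
  have hycY : yc ≤ Y := by linarith [le_max_left yc (x ^ 2 + 2)]
  have hgyc : 0 < g yc := by
    simp only [g, neg_one_pow_mul_riley_of_lam_eq k hn hyc]
    linarith [one_le_alpha k hx hyc2]
  have hgY : g Y < 0 := neg_one_pow_mul_riley_neg k hx n (by linarith [le_max_right yc (x ^ 2 + 2)])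
  obtain ⟨y, hy, hgy⟩ := intermediate_value_Ioo' hycY
    ((continuous_riley k (n + 2) x).const_smul ((-1 : ℝ) ^ n)).continuousOn ⟨hgY, hgyc⟩
  exact ⟨y, hyc2.trans_lt hy.1, (mul_eq_zero.mp hgy).resolve_left (by simp)⟩

end Riley

theorem riley_root_J_2k1_2m_general (k m n : ℕ) (hm : 3 ≤ m)
    (hc : 2 * Real.cos (((m : ℝ) - 2) * Real.pi / ((m : ℝ) - 1)) ≤
      4 * Real.cos (Real.pi / n) ^ 2 - 2) :
    ∃ y : ℝ, 2 < y ∧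
      S (m - 1) (lam k (2 * Real.cos (Real.pi / n)) y) * alpha k (2 * Real.cos (Real.pi / n)) y -
        S (m - 2) (lam k (2 * Real.cos (Real.pi / n)) y) = 0 := by
  obtain ⟨j, rfl⟩ : ∃ j, m = j + 3 := ⟨m - 3, by omega⟩
  have hx : (2 * cos (π / n)) ^ 2 ≤ 4 := by nlinarith [cos_sq_le_one (π / n)]
  have hcrit : 2 * cos (((j + 3 : ℕ) - 2) * π / ((j + 3 : ℕ) - 1)) =
      -(2 * cos (π / ((j + 1 : ℕ) + 1))) := by
    rw [← mul_neg, ← cos_pi_sub]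
    congr 2
    push_cast
    rw [show (j : ℝ) + 3 - 1 = j + 2 by ring, show (j : ℝ) + 1 + 1 = j + 2 by ring]
    field_simp
    ring
  exact exists_riley_eq_zero k (n := j + 1) (by omega) hx (by rw [← hcrit]; linarith)

theorem riley_root_J_2k1_2m (k m n : ℕ) (hk : 1 ≤ k) (hm : 3 ≤ m) (hn : 3 ≤ n)
    (hc : 2 * Real.cos (((m : ℝ) - 2) * Real.pi / ((m : ℝ) - 1)) ≤
      4 * Real.cos (Real.pi / n) ^ 2 - 2) :
    ∃ y : ℝ, 2 < y ∧
      S (m - 1) (lam k (2 * Real.cos (Real.pi / n)) y) * alpha k (2 * Real.cos (Real.pi / n)) y -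
        S (m - 2) (lam k (2 * Real.cos (Real.pi / n)) y) = 0 :=
  riley_root_J_2k1_2m_general k m n hm hc
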